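/- arXiv:0811.4415 — 6 statements merged into one kernel-verified Lean document; each statement's English description precedes it below -/
import Mathlib

section
/- The generating function S(x,y) for stack polygons counted by width (exponent of x) and height (exponent of y) satisfies S(x,y) = xy(1-x)/((1-x)^2 - y); equivalently, S = xy + xS + S_+ and S_+ = yS + xS_+ for the auxiliary series S_+ of stacks with no column of minimal height on the right. -/
/-- A stack polygon: a nonempty unimodal sequence of positive column heights
(weakly increasing, then weakly decreasing). -/
def IsStack (l : List ℕ) : Prop :=
  l ≠ [] ∧ (∀ x ∈ l, 0 < x) ∧
    ∃ l₁ l₂ : List ℕ, l = l₁ ++ l₂ ∧ l₁.Pairwise (· ≤ ·) ∧ l₂.Pairwise (· ≥ ·)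

/-- The generating function `S(x,y) = Σ x^width y^height` over all stack polygons,
as a formal power series in two variables (`X 0 = x`, `X 1 = y`). -/
noncomputable def stackGF : MvPowerSeries (Fin 2) ℚ :=
  fun d => (Set.ncard {l : List ℕ | IsStack l ∧ l.length = d 0 ∧ l.foldr max 0 = d 1} : ℚ)

/-!
A stack of width `m + 1` and height `n ≥ 1`, cut at its last column of height `n`, is a weakly
increasing word `U` over `[1, n]`, then `n`, then a weakly decreasing word `V` over `[1, n - 1]`.
Reflecting `V` by `v ↦ 2n - v` and merging it with `U` gives an arbitrary weakly increasing word of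
length `m` over `[1, 2n - 1]`, so there are `multichoose (2n - 1) m` such stacks. With these closed
forms, and with `S₊ := (1 - x) S - xy`, both equations `S = xy + xS + S₊` and `S₊ = yS + xS₊` hold
coefficientwise by Pascal's rule for `multichoose`; eliminating `S₊` gives the closed form of `S`.
-/

theorem Finset.card_sym {α : Type*} [DecidableEq α] (s : Finset α) (k : ℕ) :
    (s.sym k).card = s.card.multichoose k := by
  have h := Finset.sym_map (n := k) (Function.Embedding.subtype (· ∈ s)) s.attach
  rw [Finset.attach_map_val] at h
  rw [h, Finset.card_map, Finset.attach_eq_univ, Finset.sym_univ, Finset.card_univ,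
    Sym.card_sym_eq_multichoose, Fintype.card_coe]

namespace List

theorem foldr_max_zero_eq_iff {l : List ℕ} (hl : l ≠ []) {n : ℕ} :
    l.foldr max 0 = n ↔ n ∈ l ∧ ∀ a ∈ l, a ≤ n := by
  rw [← maximum_eq_coe_iff, ← foldr_max_of_ne_nil hl, WithBot.coe_inj]
  rfl

theorem exists_eq_append_cons_notMem {α : Type*} {a : α} {l : List α} (h : a ∈ l) :
    ∃ s t, l = s ++ a :: t ∧ a ∉ t := by
  induction l with
  | nil => simp at h
  | cons b l ih =>
    by_cases hl : a ∈ l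
    · obtain ⟨s, t, rfl, ht⟩ := ih hl
      exact ⟨b :: s, t, rfl, ht⟩
    · obtain rfl : a = b := by simpa [hl] using h
      exact ⟨[], l, rfl, hl⟩

theorem append_cons_inj_of_notMem_right {α : Type*} {A A' B B' : List α} {a : α}
    (hB : a ∉ B) (hB' : a ∉ B') : A ++ a :: B = A' ++ a :: B' ↔ A = A' ∧ B = B' := by
  constructor
  · simp only [append_eq_append_iff, cons_eq_append_iff, cons_eq_cons]
    rintro (⟨C, rfl, h⟩ | ⟨C, rfl, h⟩) <;> aesop
  · rintro ⟨rfl, rfl⟩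
    rfl

theorem map_sub_map_sub {c : ℕ} {l : List ℕ} (h : ∀ x ∈ l, x ≤ c) :
    (l.map (c - ·)).map (c - ·) = l := by
  rw [map_map]
  refine (map_congr_left fun x hx ↦ ?_).trans l.map_id
  have := h x hx
  simp only [Function.comp_apply, id_eq]
  omega

theorem perm_filter_le_append_filter_lt (n : ℕ) (l : List ℕ) :
    (l.filter (· ≤ n) ++ l.filter (n < ·)).Perm l := by
  rw [show l.filter (n < ·) = l.filter (fun x ↦ !decide (x ≤ n)) from
    filter_congr fun x _ ↦ by simp only [← decide_not, not_le]]
  exact filter_append_perm _ l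

end List

theorem pairwise_of_append_cons_eq_append {A B l₁ l₂ : List ℕ} {n : ℕ}
    (h : A ++ n :: B = l₁ ++ l₂) (h₁ : l₁.Pairwise (· ≤ ·)) (h₂ : l₂.Pairwise (· ≥ ·))
    (hmax : ∀ x ∈ A ++ n :: B, x ≤ n) : A.Pairwise (· ≤ ·) ∧ B.Pairwise (· ≥ ·) := by
  rcases List.append_eq_append_iff.1 h with ⟨C, rfl, hC⟩ | ⟨C, rfl, rfl⟩
  · refine ⟨h₁.sublist (List.sublist_append_left _ _), ?_⟩
    rcases C with _ | ⟨c, C⟩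
    · rw [List.nil_append] at hC
      subst hC
      exact (List.pairwise_cons.1 h₂).2
    · obtain ⟨rfl, rfl⟩ := List.cons_eq_cons.1 hC
      have hCn : ∀ x ∈ C, x = n := fun x hx ↦ le_antisymm (hmax x (by simp [hx]))
        (List.rel_of_pairwise_cons (h₁.sublist (List.sublist_append_right _ _)) hx)
      refine List.pairwise_append.2 ⟨?_, h₂, fun x hx y hy ↦ ?_⟩
      · exact List.pairwise_of_forall_mem_list fun x hx y hy ↦ by rw [hCn x hx, hCn y hy]
      · rw [hCn x hx]
        exact hmax y (by simp [hy])
  · refine ⟨?_, (h₂.sublist (List.sublist_append_right _ _)).of_cons⟩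
    have hCn : ∀ x ∈ C, x = n := fun x hx ↦ le_antisymm (hmax x (by simp [hx]))
      (List.pairwise_append.1 h₂ |>.2.2 x hx n List.mem_cons_self)
    refine List.pairwise_append.2 ⟨h₁, ?_, fun x hx y hy ↦ ?_⟩
    · exact List.pairwise_of_forall_mem_list fun x hx y hy ↦ by rw [hCn x hx, hCn y hy]
    · rw [hCn y hy]
      exact hmax x (by simp [hx])

def sortedLists (s : Finset ℕ) (k : ℕ) : Set (List ℕ) :=
  {f | f.Pairwise (· ≤ ·) ∧ f.length = k ∧ ∀ x ∈ f, x ∈ s}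

theorem ncard_sortedLists (s : Finset ℕ) (k : ℕ) :
    (sortedLists s k).ncard = s.card.multichoose k := by
  have hsort : sortedLists s k = (fun m : Sym ℕ k ↦ (m : Multiset ℕ).sort) '' ↑(s.sym k) := by
    ext f
    simp only [sortedLists, Set.mem_ofPred_eq, Set.mem_image, Finset.mem_coe, Finset.mem_sym_iff]
    constructor
    · rintro ⟨hf, rfl, hs⟩
      exact ⟨⟨f, rfl⟩, hs, List.mergeSort_eq_self _ hf⟩
    · rintro ⟨m, hs, rfl⟩
      exact ⟨Multiset.pairwise_sort _ _, by simp, fun x hx ↦ hs x ((Multiset.mem_sort _).1 hx)⟩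
  have hinj : Function.Injective (fun m : Sym ℕ k ↦ (m : Multiset ℕ).sort) := fun m m' h ↦ by
    simpa using congrArg ((↑) : List ℕ → Multiset ℕ) h
  rw [hsort, Set.ncard_image_of_injective _ hinj, Set.ncard_coe_finset, Finset.card_sym]

def stacksOfSize (m n : ℕ) : Set (List ℕ) :=
  {l | IsStack l ∧ l.length = m ∧ l.foldr max 0 = n}

def stackOfSorted (n : ℕ) (f : List ℕ) : List ℕ :=
  f.filter (· ≤ n) ++ n :: (f.filter (n < ·)).map (2 * n - ·)

section Bijection

variable {m n : ℕ}

theorem mapsTo_stackOfSorted (hn : 0 < n) :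
    Set.MapsTo (stackOfSorted n) (sortedLists (Finset.Ioo 0 (2 * n)) m)
      (stacksOfSize (m + 1) n) := by
  rintro f ⟨hf, rfl, hfs⟩
  simp only [Finset.mem_Ioo] at hfs
  have hmem : ∀ x ∈ stackOfSorted n f, 0 < x ∧ x ≤ n := by
    simp only [stackOfSorted, List.mem_append, List.mem_filter, List.mem_cons, List.mem_map,
      decide_eq_true_eq]
    rintro x (⟨hx, hxn⟩ | rfl | ⟨y, ⟨hy, hny⟩, rfl⟩)
    · exact ⟨(hfs x hx).1, hxn⟩
    · exact ⟨hn, le_rfl⟩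
    · have := hfs y hy
      omega
  have hne : stackOfSorted n f ≠ [] := by simp [stackOfSorted]
  refine ⟨⟨hne, fun x hx ↦ (hmem x hx).1, f.filter (· ≤ n) ++ [n],
    (f.filter (n < ·)).map (2 * n - ·), by simp [stackOfSorted], ?_, ?_⟩, ?_, ?_⟩
  · refine List.pairwise_append.2 ⟨hf.filter _, by simp, fun x hx y hy ↦ ?_⟩
    rw [List.mem_singleton.1 hy]
    simpa using (List.mem_filter.1 hx).2
  · exact List.pairwise_map.2 ((hf.filter _).imp fun h ↦ by omega)
  · have := (List.perm_filter_le_append_filter_lt n f).length_eq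
    simp only [List.length_append] at this
    simp [stackOfSorted, ← this, add_assoc]
  · exact (List.foldr_max_zero_eq_iff hne).2 ⟨by simp [stackOfSorted], fun x hx ↦ (hmem x hx).2⟩

theorem injOn_stackOfSorted :
    Set.InjOn (stackOfSorted n) (sortedLists (Finset.Ioo 0 (2 * n)) m) := by
  rintro f ⟨hf, -, hfs⟩ f' ⟨hf', -, hfs'⟩ h
  simp only [Finset.mem_Ioo] at hfs hfs'
  have hreflect : ∀ g : List ℕ, (∀ x ∈ g, 0 < x ∧ x < 2 * n) →
      n ∉ (g.filter (n < ·)).map (2 * n - ·) ∧ ∀ x ∈ g.filter (n < ·), x ≤ 2 * n := by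
    refine fun g hg ↦ ⟨?_, fun x hx ↦ (hg x (List.mem_filter.1 hx).1).2.le⟩
    simp only [List.mem_map, List.mem_filter, decide_eq_true_eq, not_exists, not_and]
    intro x ⟨hx, hnx⟩
    have := hg x hx
    omega
  obtain ⟨hn, hle⟩ := hreflect f hfs
  obtain ⟨hn', hle'⟩ := hreflect f' hfs'
  obtain ⟨hA, hB⟩ := (List.append_cons_inj_of_notMem_right hn hn').1 h
  have hB' := congrArg (List.map (2 * n - ·)) hB
  rw [List.map_sub_map_sub hle, List.map_sub_map_sub hle'] at hB'
  refine List.Perm.eq_of_pairwise' hf hf' ?_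
  calc f.Perm (f.filter (· ≤ n) ++ f.filter (n < ·)) :=
        (List.perm_filter_le_append_filter_lt n f).symm
    _ = f'.filter (· ≤ n) ++ f'.filter (n < ·) := by rw [hA, hB']
    List.Perm _ f' := List.perm_filter_le_append_filter_lt n f'

theorem surjOn_stackOfSorted :
    Set.SurjOn (stackOfSorted n) (sortedLists (Finset.Ioo 0 (2 * n)) m)
      (stacksOfSize (m + 1) n) := by
  rintro l ⟨⟨hne, hpos, l₁, l₂, hl, h₁, h₂⟩, hlen, hmax⟩
  obtain ⟨hn, hle⟩ := (List.foldr_max_zero_eq_iff hne).1 hmax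
  obtain ⟨U, V, rfl, hnV⟩ := List.exists_eq_append_cons_notMem hn
  obtain ⟨hU, hV⟩ := pairwise_of_append_cons_eq_append hl h₁ h₂ hle
  have hUn : ∀ x ∈ U, 0 < x ∧ x ≤ n := fun x hx ↦ ⟨hpos x (by simp [hx]), hle x (by simp [hx])⟩
  have hVn : ∀ x ∈ V, 0 < x ∧ x < n := fun x hx ↦
    ⟨hpos x (by simp [hx]), (hle x (by simp [hx])).lt_of_ne fun h ↦ hnV (h ▸ hx)⟩
  have hV' : ∀ x ∈ V.map (2 * n - ·), n < x ∧ x < 2 * n := by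
    simp only [List.mem_map, forall_exists_index, and_imp, forall_apply_eq_imp_iff₂]
    intro x hx
    have := hVn x hx
    omega
  refine ⟨U ++ V.map (2 * n - ·), ⟨?_, ?_, ?_⟩, ?_⟩
  · refine List.pairwise_append.2 ⟨hU, List.pairwise_map.2 (hV.imp fun h ↦ by omega),
      fun x hx y hy ↦ ((hUn x hx).2.trans_lt (hV' y hy).1).le⟩
  · simp only [List.length_append, List.length_cons, List.length_map] at hlen ⊢
    omega
  · simp only [List.mem_append, Finset.mem_Ioo]
    rintro x (hx | hx)
    · have := hUn x hx
      omega
    · have := hV' x hx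
      omega
  · have hfU : U.filter (· ≤ n) = U :=
      List.filter_eq_self.2 fun x hx ↦ by simpa using (hUn x hx).2
    have hfV : (V.map (2 * n - ·)).filter (· ≤ n) = [] :=
      List.filter_eq_nil_iff.2 fun x hx ↦ by simpa using (hV' x hx).1
    have hgU : U.filter (n < ·) = [] :=
      List.filter_eq_nil_iff.2 fun x hx ↦ by simpa using (hUn x hx).2
    have hgV : (V.map (2 * n - ·)).filter (n < ·) = V.map (2 * n - ·) :=
      List.filter_eq_self.2 fun x hx ↦ by simpa using (hV' x hx).1
    simp only [stackOfSorted, List.filter_append, hfU, hfV, hgU, hgV, List.append_nil,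
      List.nil_append, List.map_sub_map_sub (c := 2 * n) fun x hx ↦ by linarith [hVn x hx]]

theorem bijOn_stackOfSorted (hn : 0 < n) :
    Set.BijOn (stackOfSorted n) (sortedLists (Finset.Ioo 0 (2 * n)) m)
      (stacksOfSize (m + 1) n) :=
  ⟨mapsTo_stackOfSorted hn, injOn_stackOfSorted, surjOn_stackOfSorted⟩

end Bijection

def stackCount : ℕ → ℕ → ℕ
  | m + 1, n + 1 => (2 * n + 1).multichoose m
  | _, _ => 0

/-- The coefficients of `S₊ = (1 - x) S - xy`. -/
def stackPlusCount : ℕ → ℕ → ℕ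
  | m + 1, n + 2 => (2 * n + 2).multichoose m
  | _, _ => 0

theorem ncard_stacksOfSize (m n : ℕ) : (stacksOfSize m n).ncard = stackCount m n := by
  rcases m with _ | m
  · suffices stacksOfSize 0 n = ∅ by simp [this, stackCount]
    refine Set.eq_empty_of_forall_notMem ?_
    rintro l ⟨⟨hne, -⟩, hlen, -⟩
    exact hne (List.length_eq_zero_iff.1 hlen)
  rcases n with _ | n
  · suffices stacksOfSize (m + 1) 0 = ∅ by simp [this, stackCount]
    refine Set.eq_empty_of_forall_notMem ?_
    rintro l ⟨⟨hne, hpos, -⟩, -, hmax⟩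
    obtain ⟨h0, -⟩ := (List.foldr_max_zero_eq_iff hne).1 hmax
    exact (hpos 0 h0).false
  rw [← (bijOn_stackOfSorted n.succ_pos).ncard_eq, ncard_sortedLists, Nat.card_Ioo]
  rfl

theorem stackCount_succ_succ (m n : ℕ) :
    stackCount (m + 1) (n + 1) =
      (if m = 0 ∧ n = 0 then 1 else 0) + stackCount m (n + 1) + stackPlusCount (m + 1) (n + 1) := by
  rcases m with _ | m <;> rcases n with _ | n
  iterate 3 simp [stackCount, stackPlusCount, Nat.multichoose_one]
  · simp only [stackCount, stackPlusCount, Nat.add_eq_zero_iff, one_ne_zero, and_false, if_false,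
      zero_add]
    rw [show 2 * (n + 1) + 1 = 2 * n + 2 + 1 by ring, Nat.multichoose_succ_succ, add_comm]

theorem stackPlusCount_succ_succ (m n : ℕ) :
    stackPlusCount (m + 1) (n + 1) = stackCount (m + 1) n + stackPlusCount m (n + 1) := by
  rcases m with _ | m <;> rcases n with _ | n
  iterate 3 simp [stackCount, stackPlusCount]
  · simp only [stackCount, stackPlusCount]
    rw [Nat.multichoose_succ_succ (2 * n + 1), add_comm]

namespace MvPowerSeries

theorem coeff_X_mul {σ R : Type*} [CommSemiring R] [DecidableEq σ] (s : σ)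
    (φ : MvPowerSeries σ R) (d : σ →₀ ℕ) :
    coeff d (X s * φ) = if d s = 0 then 0 else coeff (d - Finsupp.single s 1) φ := by
  rw [X_def, coeff_monomial_mul, one_mul]
  simp only [Finsupp.single_le_iff, Nat.one_le_iff_ne_zero, ite_not]

theorem coeff_X_zero_mul_X_one {R : Type*} [CommSemiring R] (d : Fin 2 →₀ ℕ) :
    coeff d (X 0 * X 1 : MvPowerSeries (Fin 2) R) = if d 0 = 1 ∧ d 1 = 1 then 1 else 0 := by
  rw [X_def, X_def, monomial_mul_monomial, one_mul, coeff_monomial]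
  congr 1
  simp [Finsupp.ext_iff, Fin.forall_fin_two, eq_comm]

end MvPowerSeries

open MvPowerSeries

noncomputable def stackPlusGF : MvPowerSeries (Fin 2) ℚ :=
  fun d ↦ stackPlusCount (d 0) (d 1)

theorem coeff_stackGF (d : Fin 2 →₀ ℕ) : coeff d stackGF = stackCount (d 0) (d 1) :=
  congrArg Nat.cast (ncard_stacksOfSize (d 0) (d 1))

theorem coeff_stackPlusGF (d : Fin 2 →₀ ℕ) : coeff d stackPlusGF = stackPlusCount (d 0) (d 1) :=
  rfl

theorem stackGF_eq_add : stackGF = X 0 * X 1 + X 0 * stackGF + stackPlusGF := by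
  ext d
  rw [map_add, map_add, coeff_X_zero_mul_X_one]
  simp only [coeff_X_mul, coeff_stackGF, coeff_stackPlusGF, Finsupp.tsub_apply,
    Finsupp.single_eq_same]
  generalize d 0 = m, d 1 = n
  rcases m with _ | m
  · simp [stackCount, stackPlusCount]
  rcases n with _ | n
  · simp [stackCount, stackPlusCount]
  · simp [stackCount_succ_succ]

theorem stackPlusGF_eq_add : stackPlusGF = X 1 * stackGF + X 0 * stackPlusGF := by
  ext d
  simp only [map_add, coeff_X_mul, coeff_stackGF, coeff_stackPlusGF, Finsupp.tsub_apply,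
    Finsupp.single_eq_same]
  generalize d 0 = m, d 1 = n
  rcases m with _ | m
  · simp [stackCount, stackPlusCount]
  rcases n with _ | n
  · simp [stackPlusCount]
  · simp [stackPlusCount_succ_succ]

open MvPowerSeries in
/-- `S(x,y) = xy(1-x)/((1-x)^2 - y)`; equivalently `S = xy + xS + S₊` and
`S₊ = yS + xS₊` where `S₊` is the series of stacks whose last column is not of
minimal height (here stated through the solved system). -/
theorem stackGF_eq :
    ((1 - X 0) ^ 2 - X 1 : MvPowerSeries (Fin 2) ℚ) * stackGF = X 0 * X 1 * (1 - X 0) ∧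
    ∃ Splus : MvPowerSeries (Fin 2) ℚ,
      stackGF = X 0 * X 1 + X 0 * stackGF + Splus ∧
      Splus = X 1 * stackGF + X 0 * Splus :=
  ⟨by linear_combination (1 - X 0) * stackGF_eq_add + stackPlusGF_eq_add,
    stackPlusGF, stackGF_eq_add, stackPlusGF_eq_add⟩
end

section
/- The area generating function of column-convex polyominoes is C(q) = q(1-q)^3 / (1 - 5q + 7q^2 - 4q^3). In particular, if c_n denotes the number of column-convex polyominoes with n cells (up to translation), then Σ_{n≥1} c_n q^n equals this rational function. -/
/-- The six-letter alphabet {a, b, c, ā, b̄, c̄}, encoded as 0,…,5. -/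
abbrev CCLetter := Fin 6

/-- The linear system of languages `L₁,…,L₅` (indexed by `0,…,4`) encoding
column-convex polyominoes cell by cell:
`L₁ = {ε}`, `L₂ = L₁c ∪ L₂a ∪ L₃a ∪ L₄c`, `L₃ = L₂c ∪ L₃b ∪ L₃c`,
`L₄ = L₂ā ∪ L₃ā ∪ L₄a ∪ L₅b`, `L₅ = L₂c̄ ∪ L₃b̄ ∪ L₃c̄ ∪ L₅b`.
Here a=0, b=1, c=2, ā=3, b̄=4, c̄=5. -/
inductive CCLang : Fin 5 → List CCLetter → Prop
  | eps : CCLang 0 []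
  | l2a (w) : CCLang 0 w → CCLang 1 (w ++ [2])
  | l2b (w) : CCLang 1 w → CCLang 1 (w ++ [0])
  | l2c (w) : CCLang 2 w → CCLang 1 (w ++ [0])
  | l2d (w) : CCLang 3 w → CCLang 1 (w ++ [2])
  | l3a (w) : CCLang 1 w → CCLang 2 (w ++ [2])
  | l3b (w) : CCLang 2 w → CCLang 2 (w ++ [1])
  | l3c (w) : CCLang 2 w → CCLang 2 (w ++ [2])
  | l4a (w) : CCLang 1 w → CCLang 3 (w ++ [3])
  | l4b (w) : CCLang 2 w → CCLang 3 (w ++ [3])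
  | l4c (w) : CCLang 3 w → CCLang 3 (w ++ [0])
  | l4d (w) : CCLang 4 w → CCLang 3 (w ++ [1])
  | l5a (w) : CCLang 1 w → CCLang 4 (w ++ [5])
  | l5b (w) : CCLang 2 w → CCLang 4 (w ++ [4])
  | l5c (w) : CCLang 2 w → CCLang 4 (w ++ [5])
  | l5d (w) : CCLang 4 w → CCLang 4 (w ++ [1])

/-- Column-convex polyominoes of area `n` are in bijection with the words of
length `n` of `L₂ ∪ L₃`; this is their area generating function. -/
noncomputable def ccAreaGF : PowerSeries ℚ :=
  PowerSeries.mk fun n =>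
    (Set.ncard {w : List CCLetter | (CCLang 1 w ∨ CCLang 2 w) ∧ w.length = n} : ℚ)

/-!
Read from left to right, the system `L₁, …, L₅` is a nondeterministic automaton on five states.
Its subset construction is a DFA whose states reachable from `{0}` are `{0}, ∅, {1}, {2}, {3},
{3, 4}, {4}`, and a word lies in `L₂ ∪ L₃` iff it leads to `{1}` or `{2}`. For any DFA, the series
`G s` counting by length the words accepted from state `s` satisfies
`G s = [s accepting] + X * ∑ₐ G (δ s a)` (split off the first letter). On the seven states this is
a linear system over `ℚ⟦X⟧`, and eliminating `G {2}, G {3}, G {3, 4}, G {4}` gives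
`(1 - 5X + 7X² - 4X³) * G {1} = (1 - X)³`, while `G {0} = X * G {1}`.
-/

open PowerSeries

theorem List.ncard_length_eq_succ {α : Type*} [Fintype α] (P : List α → Prop) (n : ℕ) :
    {x : List α | P x ∧ x.length = n + 1}.ncard =
      ∑ a, {x : List α | P (a :: x) ∧ x.length = n}.ncard := by
  have (a : α) : Finite {x : List α | P (a :: x) ∧ x.length = n} :=
    ((List.finite_length_eq α n).subset fun _ hx => hx.2).to_subtype
  simp only [← Nat.card_coe_set_eq]
  rw [← Nat.card_sigma]
  refine (Nat.card_eq_of_bijective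
    (fun p => ⟨p.1 :: p.2.1, p.2.2.1, by simp [p.2.2.2]⟩) ⟨?_, ?_⟩).symm
  · rintro ⟨a, x, _⟩ ⟨b, y, _⟩ h
    simp only [Subtype.mk.injEq, List.cons.injEq] at h
    obtain ⟨rfl, rfl⟩ := h
    rfl
  · rintro ⟨_ | ⟨a, x⟩, hP, hlen⟩
    · simp at hlen
    · exact ⟨⟨a, x, hP, by simpa using hlen⟩, rfl⟩

namespace DFA

variable {α σ : Type*} (M : DFA α σ)

noncomputable def acceptsFromGF (s : σ) : ℚ⟦X⟧ :=
  PowerSeries.mk fun n => ({x | x ∈ M.acceptsFrom s ∧ x.length = n}.ncard : ℚ)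

theorem acceptsFromGF_eq [Fintype α] (s : σ) [Decidable (s ∈ M.accept)] :
    M.acceptsFromGF s =
      (if s ∈ M.accept then 1 else 0) + X * ∑ a, M.acceptsFromGF (M.step s a) := by
  ext (_ | n)
  · have : {x | M.evalFrom s x ∈ M.accept ∧ x.length = 0} =
        if s ∈ M.accept then {[]} else ∅ := by
      ext (_ | ⟨a, x⟩) <;> split_ifs with h <;> simp [h]
    simp only [acceptsFromGF, coeff_mk, mem_acceptsFrom, this, map_add, coeff_zero_X_mul]
    split_ifs <;> simp
  · simp only [acceptsFromGF, coeff_mk, map_add, coeff_succ_X_mul, map_sum, mem_acceptsFrom]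
    rw [List.ncard_length_eq_succ]
    split_ifs <;> simp [coeff_one]

theorem acceptsFromGF_eq_zero_of_step_eq_self {s : σ} (hs : s ∉ M.accept)
    (hstep : ∀ a, M.step s a = s) : M.acceptsFromGF s = 0 := by
  have heval (x : List α) : M.evalFrom s x = s := by
    induction x with
    | nil => rfl
    | cons a x ih => rw [evalFrom_cons, hstep, ih]
  ext n
  simp [acceptsFromGF, mem_acceptsFrom, heval, hs]

end DFA

/-- `i ∈ ccStep j l` iff `CCLang` has the rule `CCLang j w → CCLang i (w ++ [l])`. -/
def ccStep (j : Fin 5) (l : CCLetter) : Finset (Fin 5) :=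
  match j.val, l.val with
  | 0, 2 => {1}
  | 1, 0 => {1} | 1, 2 => {2} | 1, 3 => {3} | 1, 5 => {4}
  | 2, 0 => {1} | 2, 1 => {2} | 2, 2 => {2} | 2, 3 => {3} | 2, 4 => {4} | 2, 5 => {4}
  | 3, 0 => {3} | 3, 2 => {1}
  | 4, 1 => {3, 4}
  | _, _ => ∅

theorem CCLang.append_singleton_of_mem_ccStep {i j : Fin 5} {l : CCLetter} {w : List CCLetter}
    (h : i ∈ ccStep j l) (hw : CCLang j w) : CCLang i (w ++ [l]) := by
  fin_cases j <;> fin_cases l <;> simp [ccStep] at h <;>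
    aesop (add 50% constructors CCLang)

def ccDFA : DFA CCLetter (Finset (Fin 5)) where
  step S l := S.biUnion (ccStep · l)
  start := {0}
  accept := {S | 1 ∈ S ∨ 2 ∈ S}

@[simp]
theorem mem_ccDFA_accept {S : Finset (Fin 5)} : S ∈ ccDFA.accept ↔ 1 ∈ S ∨ 2 ∈ S := Iff.rfl

instance : DecidablePred (· ∈ ccDFA.accept) := fun _ =>
  decidable_of_iff' _ mem_ccDFA_accept

theorem ccLang_iff_mem_ccDFA_eval (i : Fin 5) (w : List CCLetter) :
    CCLang i w ↔ i ∈ ccDFA.eval w := by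
  constructor
  · intro h
    induction h with
    | eps => exact Finset.mem_singleton_self 0
    | _ =>
      rw [DFA.eval_append_singleton]
      exact Finset.mem_biUnion.2 ⟨_, ‹_›, by decide⟩
  · induction w using List.reverseRecOn generalizing i with
    | nil =>
      intro h
      obtain rfl : i = 0 := Finset.mem_singleton.1 h
      exact .eps
    | append_singleton w l ih =>
      rw [DFA.eval_append_singleton]
      intro h
      obtain ⟨j, hj, hij⟩ := Finset.mem_biUnion.1 h
      exact CCLang.append_singleton_of_mem_ccStep hij (ih j hj)

theorem ccAreaGF_eq_acceptsFromGF : ccAreaGF = ccDFA.acceptsFromGF {0} := by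
  simp only [ccAreaGF, DFA.acceptsFromGF, DFA.mem_acceptsFrom, ccLang_iff_mem_ccDFA_eval]
  rfl

section ccDFA

local notation "G" => ccDFA.acceptsFromGF

theorem ccDFA_acceptsFromGF_empty : G ∅ = 0 :=
  ccDFA.acceptsFromGF_eq_zero_of_step_eq_self (by decide) fun _ => rfl

theorem ccDFA_acceptsFromGF_zero : G {0} = X * G {1} := by
  have hstep : ccDFA.step {0} = ![∅, ∅, {1}, ∅, ∅, ∅] := by decide
  conv_lhs => rw [DFA.acceptsFromGF_eq, hstep]
  simp [Fin.sum_univ_six, ccDFA_acceptsFromGF_empty]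

theorem ccDFA_acceptsFromGF_one : G {1} = 1 + X * (G {1} + G {2} + G {3} + G {4}) := by
  have hstep : ccDFA.step {1} = ![{1}, ∅, {2}, {3}, ∅, {4}] := by decide
  conv_lhs => rw [DFA.acceptsFromGF_eq, hstep]
  simp [Fin.sum_univ_six, ccDFA_acceptsFromGF_empty]

theorem ccDFA_acceptsFromGF_two :
    G {2} = 1 + X * (G {1} + 2 * G {2} + G {3} + 2 * G {4}) := by
  have hstep : ccDFA.step {2} = ![{1}, {2}, {2}, {3}, {4}, {4}] := by decide
  conv_lhs => rw [DFA.acceptsFromGF_eq, hstep]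
  simp [Fin.sum_univ_six]
  ring

theorem ccDFA_acceptsFromGF_three : G {3} = X * (G {1} + G {3}) := by
  have hstep : ccDFA.step {3} = ![{3}, ∅, {1}, ∅, ∅, ∅] := by decide
  conv_lhs => rw [DFA.acceptsFromGF_eq, hstep]
  simp [Fin.sum_univ_six, ccDFA_acceptsFromGF_empty]
  ring

theorem ccDFA_acceptsFromGF_three_four : G {3, 4} = X * (G {1} + G {3} + G {3, 4}) := by
  have hstep : ccDFA.step {3, 4} = ![{3}, {3, 4}, {1}, ∅, ∅, ∅] := by decide
  conv_lhs => rw [DFA.acceptsFromGF_eq, hstep]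
  simp [Fin.sum_univ_six, ccDFA_acceptsFromGF_empty]
  ring

theorem ccDFA_acceptsFromGF_four : G {4} = X * G {3, 4} := by
  have hstep : ccDFA.step {4} = ![∅, {3, 4}, ∅, ∅, ∅, ∅] := by decide
  conv_lhs => rw [DFA.acceptsFromGF_eq, hstep]
  simp [Fin.sum_univ_six, ccDFA_acceptsFromGF_empty]

theorem ccDFA_acceptsFromGF_one_mul :
    (1 - 5 * X + 7 * X ^ 2 - 4 * X ^ 3) * G {1} = (1 - X) ^ 3 := by
  have e3 : (1 - X) * G {3} = X * G {1} := by linear_combination ccDFA_acceptsFromGF_three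
  have e34 : (1 - X) ^ 2 * G {3, 4} = X * G {1} := by
    linear_combination (1 - X) * ccDFA_acceptsFromGF_three_four + X * e3
  have e4 : (1 - X) ^ 2 * G {4} = X ^ 2 * G {1} := by
    linear_combination (1 - X) ^ 2 * ccDFA_acceptsFromGF_four + X * e34
  have e2 : (1 - X) ^ 3 * G {2} = ((1 - X) ^ 2 + X ^ 3) * G {1} := by
    linear_combination (1 - X) ^ 2 * (ccDFA_acceptsFromGF_two - ccDFA_acceptsFromGF_one) + X * e4
  linear_combination
    (1 - X) ^ 3 * ccDFA_acceptsFromGF_one + X * e2 + X * (1 - X) ^ 2 * e3 + X * (1 - X) * e4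

end ccDFA

open PowerSeries in
/-- The area generating function of column-convex polyominoes is
`C(q) = q(1-q)^3/(1 - 5q + 7q^2 - 4q^3)`. -/
theorem ccAreaGF_eq :
    (1 - 5 * X + 7 * X ^ 2 - 4 * X ^ 3 : PowerSeries ℚ) * ccAreaGF
      = X * (1 - X) ^ 3 := by
  rw [ccAreaGF_eq_acceptsFromGF]
  linear_combination
    (1 - 5 * X + 7 * X ^ 2 - 4 * X ^ 3) * ccDFA_acceptsFromGF_zero + X * ccDFA_acceptsFromGF_one_mul
end

section
/- The area generating function of directed column-convex polyominoes is DC(q) = q(1-q)/(1 - 3q + q^2). Equivalently, the number of directed column-convex polyominoes of area n satisfies the recurrence implied by this rational function; its coefficients are the odd-indexed Fibonacci numbers. -/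
/-- The alphabet {a, c, ā, c̄}, encoded as a=0, c=1, ā=2, c̄=3. -/
abbrev DCCLetter := Fin 4

/-- The linear system of languages `L₁,…,L₄` (indexed by `0,…,3`) encoding
directed column-convex polyominoes cell by cell:
`L₁ = {ε}`, `L₂ = L₁c ∪ L₂a ∪ L₃a ∪ L₄c`, `L₃ = L₂c ∪ L₃c`, `L₄ = L₂ā ∪ L₃ā ∪ L₄a`. -/
inductive DCCLang : Fin 4 → List DCCLetter → Prop
  | eps : DCCLang 0 []
  | l2a (w) : DCCLang 0 w → DCCLang 1 (w ++ [1])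
  | l2b (w) : DCCLang 1 w → DCCLang 1 (w ++ [0])
  | l2c (w) : DCCLang 2 w → DCCLang 1 (w ++ [0])
  | l2d (w) : DCCLang 3 w → DCCLang 1 (w ++ [1])
  | l3a (w) : DCCLang 1 w → DCCLang 2 (w ++ [1])
  | l3b (w) : DCCLang 2 w → DCCLang 2 (w ++ [1])
  | l4a (w) : DCCLang 1 w → DCCLang 3 (w ++ [2])
  | l4b (w) : DCCLang 2 w → DCCLang 3 (w ++ [2])
  | l4c (w) : DCCLang 3 w → DCCLang 3 (w ++ [0])

/-- Directed column-convex polyominoes of area `n` are in bijection with the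
words of length `n` of `L₂ ∪ L₃`; this is their area generating function. -/
noncomputable def dccAreaGF : PowerSeries ℚ :=
  PowerSeries.mk fun n =>
    (Set.ncard {w : List DCCLetter | (DCCLang 1 w ∨ DCCLang 2 w) ∧ w.length = n} : ℚ)

/-!
The system defining `L₁, …, L₄` is deterministic: each `Lⱼ` is the set of words driving a
DFA with states `L₁, …, L₄` (plus a dead state) from `L₁` to `Lⱼ`. For any DFA the generating
functions `F_t` of the words ending in state `t` satisfy `F_t = [t = start] + X ∑ₛ A_{s t} F_s`,
`A` the transition-count matrix. Here this reads `F₁ = 1`, `F₂ = X (F₁ + F₂ + F₃ + F₄)`,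
`F₃ = X (F₂ + F₃)`, `F₄ = X (F₂ + F₃ + F₄)`, and eliminating `F₁` and `F₄` gives
`(1 - 3X + X²) (F₂ + F₃) = X (1 - X)`.
-/

open Finset PowerSeries

theorem List.ncard_setOf_and_length_eq {α : Type*} [Fintype α] (P : List α → Prop)
    [DecidablePred P] (n : ℕ) :
    {w : List α | P w ∧ w.length = n}.ncard = #{f : Fin n → α | P (List.ofFn f)} := by
  have : {w : List α | P w ∧ w.length = n} = List.ofFn '' {f : Fin n → α | P (List.ofFn f)} := by
    ext w
    constructor
    · rintro ⟨hw, rfl⟩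
      exact ⟨w.get, by simpa [List.ofFn_get] using hw, List.ofFn_get w⟩
    · rintro ⟨f, hf, rfl⟩
      exact ⟨hf, List.length_ofFn⟩
  rw [this, Set.ncard_image_of_injective _ List.ofFn_injective, ← Set.ncard_coe_finset]
  simp

namespace DFA

variable {α σ : Type*} [Fintype α] [DecidableEq σ] (M : DFA α σ)

def evalCount (s : σ) (n : ℕ) : ℕ := #{f : Fin n → α | M.eval (List.ofFn f) = s}

def transitionCount (s t : σ) : ℕ := #{a | M.step s a = t}

theorem evalCount_zero (s : σ) : M.evalCount s 0 = if s = M.start then 1 else 0 := by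
  simp only [evalCount, List.ofFn_zero, eval_nil, eq_comm (a := M.start)]
  split_ifs <;> simp [*]

theorem evalCount_succ [Fintype σ] (t : σ) (n : ℕ) :
    M.evalCount t (n + 1) = ∑ s, M.transitionCount s t * M.evalCount s n :=
  calc M.evalCount t (n + 1) = ∑ w : Fin n → α, M.transitionCount (M.eval (List.ofFn w)) t := by
        simp only [evalCount, transitionCount, card_filter]
        rw [← (Fin.snocEquiv fun _ => α).sum_comp, Fintype.sum_prod_type, Finset.sum_comm]
        simp only [Fin.snocEquiv_apply, List.ofFn_succ', Fin.snoc_castSucc, Fin.snoc_last,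
          List.concat_eq_append, eval_append_singleton]
    _ = ∑ s, M.transitionCount s t * M.evalCount s n := by
        rw [← Finset.sum_fiberwise' univ (fun w : Fin n → α => M.eval (List.ofFn w))
          (M.transitionCount · t)]
        simp only [sum_const, smul_eq_mul, evalCount, mul_comm]

theorem ncard_accepts_length_eq (S : Finset σ) (hS : M.accept = S) (n : ℕ) :
    {w | w ∈ M.accepts ∧ w.length = n}.ncard = ∑ t ∈ S, M.evalCount t n := by
  classical
  rw [List.ncard_setOf_and_length_eq]
  simp only [card_filter, evalCount, mem_accepts, hS, Finset.mem_coe]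
  rw [Finset.sum_comm]
  simp [Finset.sum_ite_eq]

variable (R : Type*) [Semiring R]

noncomputable def evalGF (s : σ) : R⟦X⟧ := PowerSeries.mk fun n => (M.evalCount s n : R)

theorem evalGF_eq [Fintype σ] (t : σ) :
    M.evalGF R t =
      (if t = M.start then 1 else 0) + X * ∑ s, M.transitionCount s t • M.evalGF R s := by
  ext (_ | n)
  · by_cases h : t = M.start <;> simp [h, evalGF, evalCount_zero]
  · simp only [evalGF, evalCount_succ, map_add, coeff_succ_X_mul, map_sum, map_nsmul, coeff_mk]
    split_ifs <;> simp

end DFA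

def dccStep : Fin 4 → DCCLetter → Option (Fin 4)
  | 0, 1 => some 1
  | 1, 0 => some 1
  | 2, 0 => some 1
  | 3, 1 => some 1
  | 1, 1 => some 2
  | 2, 1 => some 2
  | 1, 2 => some 3
  | 2, 2 => some 3
  | 3, 0 => some 3
  | _, _ => none

/-- State `some i` is the language `DCCLang i`, i.e. `L_{i+1}`; `none` is the dead state. -/
@[simps]
def dccDFA : DFA DCCLetter (Option (Fin 4)) where
  step s a := s.bind (dccStep · a)
  start := some 0
  accept := {some 1, some 2}

theorem DCCLang.append_singleton {i j : Fin 4} {a : DCCLetter} (h : dccStep i a = some j)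
    {w : List DCCLetter} (hw : DCCLang i w) : DCCLang j (w ++ [a]) := by
  fin_cases i <;> fin_cases a <;> simp [dccStep] at h <;> subst h <;>
    first
      | exact .l2a _ hw | exact .l2b _ hw | exact .l2c _ hw | exact .l2d _ hw | exact .l3a _ hw
      | exact .l3b _ hw | exact .l4a _ hw | exact .l4b _ hw | exact .l4c _ hw

theorem dccLang_iff_eval {i : Fin 4} {w : List DCCLetter} :
    DCCLang i w ↔ dccDFA.eval w = some i := by
  constructor
  · intro h
    induction h <;> simp_all [DFA.eval_append_singleton, dccStep]
  · induction w using List.reverseRecOn generalizing i with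
    | nil =>
      intro h
      obtain rfl : 0 = i := Option.some_injective _ h
      exact .eps
    | append_singleton w a ih =>
      intro h
      rw [DFA.eval_append_singleton] at h
      obtain ⟨j, hj, hstep⟩ := Option.bind_eq_some_iff.mp h
      exact DCCLang.append_singleton hstep (ih hj)

theorem mem_accepts_dccDFA {w : List DCCLetter} :
    w ∈ dccDFA.accepts ↔ DCCLang 1 w ∨ DCCLang 2 w := by
  simp [DFA.mem_accepts, dccLang_iff_eval]

theorem evalGF_dccDFA (R : Type*) [Semiring R] :
    dccDFA.evalGF R (some 0) = 1 ∧
    dccDFA.evalGF R (some 1) = X * (dccDFA.evalGF R (some 0) + dccDFA.evalGF R (some 1) +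
      dccDFA.evalGF R (some 2) + dccDFA.evalGF R (some 3)) ∧
    dccDFA.evalGF R (some 2) = X * (dccDFA.evalGF R (some 1) + dccDFA.evalGF R (some 2)) ∧
    dccDFA.evalGF R (some 3) = X * (dccDFA.evalGF R (some 1) + dccDFA.evalGF R (some 2) +
      dccDFA.evalGF R (some 3)) := by
  refine ⟨?_, ?_, ?_, ?_⟩ <;> refine (dccDFA.evalGF_eq R _).trans ?_ <;>
    simp only [DFA.transitionCount, card_filter, Fin.sum_univ_four, Fintype.sum_option] <;>
    simp [dccStep]

theorem dccAreaGF_eq_evalGF_add :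
    dccAreaGF = dccDFA.evalGF ℚ (some 1) + dccDFA.evalGF ℚ (some 2) := by
  ext n
  simp only [dccAreaGF, coeff_mk, ← mem_accepts_dccDFA,
    dccDFA.ncard_accepts_length_eq {some 1, some 2} (by simp), map_add, DFA.evalGF]
  simp

open PowerSeries in
/-- The area generating function of directed column-convex polyominoes is
`DC(q) = q(1-q)/(1 - 3q + q^2)`. -/
theorem dccAreaGF_eq :
    (1 - 3 * X + X ^ 2 : PowerSeries ℚ) * dccAreaGF = X * (1 - X) := by
  obtain ⟨h₀, h₁, h₂, h₃⟩ := evalGF_dccDFA ℚ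
  rw [dccAreaGF_eq_evalGF_add]
  linear_combination (1 - X) * (h₁ + h₂) + X * h₃ + X * (1 - X) * h₀
end

section
/- The anisotropic perimeter generating function S_2(x,y) of self-avoiding polygons confined to a horizontal strip of height 2 satisfies S_2(x,y) = xy(2 - 2x + y + 3xy)/((1-x)^2 - 2x^2 y), where x marks half the number of horizontal edges and y marks half the number of vertical edges (polygons of height exactly 1 being counted twice). -/
open MvPowerSeries in
/-- The anisotropic perimeter generating function of self-avoiding polygons in a
strip of height 2. Here the variables are `x = X 0` (marking half the number of
horizontal edges) and `z = X 1` with `y = z^2` (so `z` marks vertical edges and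
`y` half their number). The series `Lₐ, L_b, L_b̃` count the encodings of
incomplete polygons ending with the corresponding state letter, and satisfy the
stated linear system; `S₂ = z²Lₐ + zL_b + zL_b̃` then satisfies
`S₂(x,y) = xy(2 - 2x + y + 3xy)/((1-x)² - 2x²y)` (with `y = z²`). -/
theorem sap_strip2_gf
    (La Lb Lb' S2 : MvPowerSeries (Fin 2) ℚ)
    (x : MvPowerSeries (Fin 2) ℚ) (z : MvPowerSeries (Fin 2) ℚ)
    (hx : x = X 0) (hz : z = X 1)
    (hLa : La = x * (z ^ 2 + La + z * Lb + z * Lb'))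
    (hLb : Lb = x * (z + z * La + Lb))
    (hLb' : Lb' = x * (z + z * La + Lb'))
    (hS2 : S2 = z ^ 2 * La + z * Lb + z * Lb') :
    ((1 - x) ^ 2 - 2 * x ^ 2 * z ^ 2) * S2
      = x * z ^ 2 * (2 - 2 * x + z ^ 2 + 3 * x * z ^ 2) := by
  linear_combination ((1 - x) ^ 2 - 2 * x ^ 2 * z ^ 2) * hS2
    + (z ^ 2 * (1 - x) + 2 * x * z ^ 2) * hLa
    + (x * z ^ 3 + z * (1 - x)) * (hLb + hLb')
end

section
/- The number of staircase polygons of half-perimeter n+1 equals the n-th Catalan number C_n = C(2n,n)/(n+1), for all n ≥ 1. Equivalently, the formal power series S(t) = (1 - 2t - sqrt(1-4t))/2 has coefficient of t^{n+1} equal to C_n. -/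
/-!
`T = S + X` satisfies `T = X + T²` with `T(0) = 0`, an equation whose solution is unique: two
solutions differ by a multiple of the unit `1 - (T + U)`. Mathlib's Catalan series `C` satisfies
`C = 1 + X C²`, so `X C` is that solution, and `[t^{n+1}] S = [t^{n+1}] (X C) = Catalan(n)` once
`n ≥ 1` removes the contribution of `X`.
-/

namespace PowerSeries

theorem eq_of_eq_X_add_sq {R : Type*} [CommRing R] {T U : R⟦X⟧}
    (hT0 : constantCoeff T = 0) (hU0 : constantCoeff U = 0)
    (hT : T = X + T ^ 2) (hU : U = X + U ^ 2) : T = U := by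
  have hfactor : (T - U) * (1 - (T + U)) = 0 := by linear_combination hT - hU
  have hunit : IsUnit (1 - (T + U)) := by
    rw [isUnit_iff_constantCoeff]
    simp [hT0, hU0]
  exact sub_eq_zero.mp (hunit.mul_left_eq_zero.mp hfactor)

theorem X_mul_map_catalanSeries_eq_X_add_sq {R : Type*} [CommSemiring R] :
    X * map (Nat.castRingHom R) catalanSeries
      = X + (X * map (Nat.castRingHom R) catalanSeries) ^ 2 := by
  conv_lhs => rw [← catalanSeries_sq_mul_X_add_one]
  simp only [map_add, map_mul, map_pow, map_X, map_one]
  ring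

theorem coeff_succ_X_mul_map_catalanSeries {R : Type*} [CommSemiring R] (n : ℕ) :
    coeff (n + 1) (X * map (Nat.castRingHom R) catalanSeries) = (catalan n : R) := by
  simp [coeff_succ_X_mul, coeff_map]

end PowerSeries

open PowerSeries in
/-- The number of staircase polygons of half-perimeter `n+1` equals the `n`-th
Catalan number, for all `n ≥ 1`: the unique formal power series `S` with zero
constant term satisfying `S = S² + 2tS + t²` (the half-perimeter generating
function of staircase polygons, `S(t) = (1 - 2t - √(1-4t))/2`) has
`[t^{n+1}] S = Catalan(n)`. -/
theorem staircase_halfperimeter_catalan (S : PowerSeries ℚ)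
    (h0 : PowerSeries.constantCoeff S = 0)
    (heq : S = S ^ 2 + 2 * X * S + X ^ 2) :
    ∀ n : ℕ, 1 ≤ n → PowerSeries.coeff (n + 1) S = catalan n := by
  intro n hn
  have hsol : S + X = X * map (Nat.castRingHom ℚ) catalanSeries :=
    eq_of_eq_X_add_sq (by simp [h0]) (by simp) (by linear_combination heq)
      X_mul_map_catalanSeries_eq_X_add_sq
  have hX : coeff (n + 1) (X : ℚ⟦X⟧) = 0 := by
    rw [coeff_X, if_neg (by omega)]
  rw [← coeff_succ_X_mul_map_catalanSeries, ← hsol, map_add, hX, add_zero]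
end

section
/- If H(q) is the unique formal power series with H(0)=0 satisfying H = q + qH + qH^2 (half-pyramids of dimers by dimer count), then H(q) = (1 - q - sqrt((1+q)(1-3q)))/(2q), and its coefficients are the Motzkin numbers shifted: [q^{n+1}]H = M_n, the n-th Motzkin number. -/
/-! Since `H(0) = 0`, the coefficient of `q^{n+2}` in `qH²` only involves the coefficients
`[q^{k+1}]H` with `k < n`, so comparing coefficients in `H = q + qH + qH²` gives exactly the
Motzkin recurrence for `[q^{n+1}]H`. -/

/-- The Motzkin numbers: `M₀ = 1`, `M_{n+1} = M_n + Σ_{k=0}^{n-1} M_k M_{n-1-k}`. -/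
def motzkin : ℕ → ℕ
  | 0 => 1
  | n + 1 => motzkin n + ∑ k ∈ (Finset.range n).attach,
      motzkin k.1 * motzkin (n - 1 - k.1)
decreasing_by
  · exact Nat.lt_succ_self n
  · have := Finset.mem_range.mp k.2; omega
  · omega

theorem motzkin_succ (n : ℕ) :
    motzkin (n + 1) = motzkin n + ∑ k ∈ Finset.range n, motzkin k * motzkin (n - 1 - k) := by
  rw [motzkin, Finset.sum_attach (Finset.range n) fun k => motzkin k * motzkin (n - 1 - k)]

namespace PowerSeries

section CommSemiring

variable {R : Type*} [CommSemiring R]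

theorem coeff_succ_sq_of_constantCoeff_eq_zero {H : R⟦X⟧}
    (h0 : constantCoeff H = 0) (m : ℕ) :
    coeff (m + 1) (H ^ 2) = ∑ k ∈ Finset.range m, coeff (k + 1) H * coeff (m - k) H := by
  have hc0 : coeff 0 H = 0 := by rwa [coeff_zero_eq_constantCoeff]
  rw [pow_two, coeff_mul, Finset.Nat.sum_antidiagonal_eq_sum_range_succ_mk,
    Finset.sum_range_succ', Finset.sum_range_succ, Nat.sub_self, hc0]
  simp only [mul_zero, zero_mul, add_zero]
  exact Finset.sum_congr rfl fun k _ => by rw [Nat.add_sub_add_right]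

variable {H : R⟦X⟧} (heq : H = X + X * H + X * H ^ 2)
include heq

theorem coeff_one_of_eq_X_add_X_mul_add_X_mul_sq (h0 : constantCoeff H = 0) :
    coeff 1 H = 1 := by
  have h := congrArg (coeff 1) heq
  rwa [map_add, map_add, coeff_succ_X_mul, coeff_succ_X_mul, coeff_one_X,
    coeff_zero_eq_constantCoeff, map_pow, h0,
    zero_pow two_ne_zero, add_zero, add_zero] at h

theorem coeff_succ_succ_of_eq_X_add_X_mul_add_X_mul_sq (h0 : constantCoeff H = 0) (m : ℕ) :
    coeff (m + 2) H = coeff (m + 1) H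
      + ∑ k ∈ Finset.range m, coeff (k + 1) H * coeff (m - k) H := by
  have h := congrArg (coeff (m + 2)) heq
  rwa [map_add, map_add, coeff_succ_X_mul, coeff_succ_X_mul, coeff_X, if_neg (by omega),
    zero_add, coeff_succ_sq_of_constantCoeff_eq_zero h0] at h

theorem coeff_succ_eq_motzkin_of_eq_X_add_X_mul_add_X_mul_sq (h0 : constantCoeff H = 0)
    (n : ℕ) : coeff (n + 1) H = motzkin n := by
  induction n using Nat.strong_induction_on with
  | _ n ih =>
    match n with
    | 0 => simp [coeff_one_of_eq_X_add_X_mul_add_X_mul_sq heq h0, motzkin]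
    | m + 1 =>
      have hsum : ∑ k ∈ Finset.range m, coeff (k + 1) H * coeff (m - k) H
          = ∑ k ∈ Finset.range m, (motzkin k * motzkin (m - 1 - k) : R) :=
        Finset.sum_congr rfl fun k hk => by
          have hk := Finset.mem_range.mp hk
          rw [ih k (by omega), show m - k = m - 1 - k + 1 by omega, ih (m - 1 - k) (by omega)]
      rw [coeff_succ_succ_of_eq_X_add_X_mul_add_X_mul_sq heq h0, hsum, ih m m.lt_succ_self,
        motzkin_succ]
      push_cast
      rfl

end CommSemiring

-- Completing the square: `(1 - X - 2XH)² = (1 + X)(1 - 3X) - 4X(H - X - XH - XH²)`.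
theorem sq_one_sub_X_sub_two_mul_X_mul_of_eq {R : Type*} [CommRing R] {H : R⟦X⟧}
    (heq : H = X + X * H + X * H ^ 2) :
    (1 - X - 2 * X * H) ^ 2 = (1 + X) * (1 - 3 * X) := by
  linear_combination (-4 * (X : R⟦X⟧)) * heq

end PowerSeries

open PowerSeries in
/-- If `H` is the unique formal power series with `H(0) = 0` satisfying
`H = q + qH + qH²` (half-pyramids of dimers counted by dimers), then
`H(q) = (1 - q - √((1+q)(1-3q)))/(2q)`, i.e. `(1 - q - 2qH)² = (1+q)(1-3q)`,
and its coefficients are the shifted Motzkin numbers: `[q^{n+1}]H = Mₙ`. -/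
theorem halfpyramids_motzkin (H : PowerSeries ℚ)
    (h0 : PowerSeries.constantCoeff H = 0)
    (heq : H = X + X * H + X * H ^ 2) :
    (1 - X - 2 * X * H) ^ 2 = (1 + X) * (1 - 3 * X) ∧
    ∀ n : ℕ, PowerSeries.coeff (n + 1) H = motzkin n :=
  ⟨sq_one_sub_X_sub_two_mul_X_mul_of_eq heq,
    coeff_succ_eq_motzkin_of_eq_X_add_X_mul_add_X_mul_sq heq h0⟩
end
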